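/- Let τ = ρ_0 ρ_1 ⋯ ρ_n be a faithful (n+1)-dimensional Z_2^n-representation, where {ρ_1,...,ρ_n} is a basis of Hom(Z_2^n, Z_2) and ρ_0 = ρ_1 + ⋯ + ρ_{p+1}, with dual basis {α_1,...,α_n} of Z_2^n (ρ_i(α_j) = δ_{ij}). Then the element D(τ) := [α_1,...,α_{p+1}] ⊗ {α_{p+2},...,α_n} is independent of the choice of the basis {ρ_1,...,ρ_n} among the factors of τ. -/
import Mathlib


open Finset

attribute [local instance] Classical.propDecidable

abbrev V (n : ℕ) : Type := Fin n → ZMod 2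

def LinIndep {n : ℕ} (s : Finset (V n)) : Prop :=
  LinearIndependent (ZMod 2) (fun x : (s : Set (V n)) => (x : V n))

def IsSimplex (n p : ℕ) (σ : Finset (V n)) : Prop :=
  σ.card = p + 1 ∧ LinIndep σ

def shift {n : ℕ} (σ : Finset (V n)) (α : V n) : Finset (V n) :=
  σ.image (· + α)

def SimpRel {n : ℕ} (σ σ' : Finset (V n)) : Prop :=
  σ = σ' ∨ ∃ α : V n, σ ∩ σ' = {α} ∧ shift (σ \ {α}) α = σ' \ {α}

/-- The element `[σ] ⊗ τ` of `D_p ⊗ C_q`, realized as the chain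
`∑_{σ' ~ σ} (σ', τ)` on pairs of simplices. -/
noncomputable def pairClass {n : ℕ} (σ τ : Finset (V n)) :
    (Finset (V n) × Finset (V n)) →₀ ZMod 2 :=
  ∑ σ' ∈ Finset.univ.filter (fun σ' => SimpRel σ σ'), Finsupp.single (σ', τ) 1

lemma mod2_add_self {M : Type*} [AddCommMonoid M] [Module (ZMod 2) M] (m : M) : m + m = 0 := by
  have h := two_smul (ZMod 2) m
  rw [show ((2:ZMod 2)) = 0 by decide, zero_smul] at h
  exact h.symm

section Aux
variable {n : ℕ}

lemma add_inj (a : V n) : Function.Injective (· + a) := fun x y h => by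
  simpa using congrArg (· + a) h

lemma shift_shift (s : Finset (V n)) (a : V n) : shift (shift s a) a = s := by
  simp only [shift, image_image]
  have : ((· + a) ∘ (· + a)) = (id : V n → V n) := by
    funext x; simp [Function.comp, add_assoc, mod2_add_self]
  rw [this, image_id]

/-- the neighbor of σ with pivot a -/
def nbr (σ : Finset (V n)) (a : V n) : Finset (V n) := insert a (shift (σ.erase a) a)

def Good (σ : Finset (V n)) : Prop := ∀ t ⊆ σ, (∑ x ∈ t, x) = 0 → t = ∅

lemma good_zero {σ : Finset (V n)} (h : Good σ) : (0 : V n) ∉ σ := by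
  intro h0
  have := h {0} (by simpa using h0) (by simp)
  simp at this

lemma good_three {σ : Finset (V n)} (h : Good σ) {x y z : V n} (hx : x ∈ σ) (hy : y ∈ σ)
    (hz : z ∈ σ) (hxy : x ≠ y) (hxz : x ≠ z) (hyz : y ≠ z) : x + y + z ≠ 0 := by
  intro h0
  have hsub : ({x, y, z} : Finset (V n)) ⊆ σ := by
    intro u hu; simp at hu; rcases hu with h|h|h <;> subst h <;> assumption
  have := h {x, y, z} hsub (by
    rw [Finset.sum_insert (by simp [hxy, hxz]), Finset.sum_insert (by simp [hyz]),
      Finset.sum_singleton, ← add_assoc, h0])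
  simp at this

lemma mem_nbr_elim {σ : Finset (V n)} {a b : V n} (hb : b ∈ nbr σ a) :
    b = a ∨ ∃ y ∈ σ.erase a, b = y + a := by
  rcases Finset.mem_insert.mp hb with h | h
  · exact Or.inl h
  · rcases Finset.mem_image.mp h with ⟨y, hy, hyb⟩
    exact Or.inr ⟨y, hy, hyb.symm⟩

lemma nbr_nbr_self {σ : Finset (V n)} {a : V n} (hσ : Good σ) (ha : a ∈ σ) :
    nbr (nbr σ a) a = σ := by
  have hax : a ∉ shift (σ.erase a) a := by
    intro h
    rcases Finset.mem_image.mp h with ⟨y, hy, hya⟩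
    have : y = 0 := by
      have := congrArg (· + a) hya
      simpa [add_assoc, mod2_add_self] using this
    exact good_zero hσ (this ▸ (Finset.mem_of_mem_erase hy))
  unfold nbr
  rw [Finset.erase_insert hax, shift_shift, Finset.insert_erase ha]

lemma nbr_nbr_shift {σ : Finset (V n)} {a y : V n} (hσ : Good σ) (ha : a ∈ σ) (hy : y ∈ σ)
    (hya : y ≠ a) : nbr (nbr σ a) (y + a) = nbr σ y := by
  have hy0 : y ≠ 0 := fun h => good_zero hσ (h ▸ hy)
  have hyaa : y + a ≠ a := fun h => hy0 (by
    have := congrArg (· + a) h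
    simpa [add_assoc, mod2_add_self] using this)
  have hyera : y ∈ σ.erase a := Finset.mem_erase.mpr ⟨hya, hy⟩
  have haery : a ∈ σ.erase y := Finset.mem_erase.mpr ⟨fun h => hya h.symm, ha⟩
  have hZ : shift ((σ.erase a).erase y) a = (shift (σ.erase a) a).erase (y + a) := by
    simpa [shift] using Finset.image_erase (add_inj a) (σ.erase a) y
  have hfun : (fun x : V n => x + a + (y + a)) = (· + y) := by
    funext x
    calc x + a + (y + a) = x + y + (a + a) := by abel
    _ = x + y := by rw [mod2_add_self, add_zero]
  unfold nbr
  rw [Finset.erase_insert_of_ne (fun h => hyaa h.symm), ← hZ]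
  rw [show σ.erase y = insert a ((σ.erase a).erase y) from by
    rw [Finset.erase_right_comm, Finset.insert_erase haery]]
  simp only [shift, image_insert, image_image, Function.comp_def, hfun]
  rw [show a + (y + a) = y from by
    calc a + (y + a) = y + (a + a) := by abel
    _ = y := by rw [mod2_add_self, add_zero]]
  rw [Finset.insert_comm, show a + y = y + a from add_comm a y]

lemma good_nbr {σ : Finset (V n)} {a : V n} (hσ : Good σ) (ha : a ∈ σ) : Good (nbr σ a) := by
  intro t ht hsum
  have ht' : t.erase a ⊆ shift (σ.erase a) a := by
    intro x hx
    rcases Finset.mem_insert.mp (ht (Finset.mem_of_mem_erase hx)) with h | h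
    · exact absurd h (Finset.ne_of_mem_erase hx)
    · exact h
  obtain ⟨Y, hYsub, hYim⟩ := Finset.subset_image_iff.mp ht'
  have haY : a ∉ Y := fun h => (Finset.mem_erase.mp (hYsub h)).1 rfl
  have hsum' : (∑ x ∈ t.erase a, x) = (∑ y ∈ Y, y) + (Y.card : ZMod 2) • a := by
    rw [← hYim, Finset.sum_image (fun x _ y _ h => add_inj a h)]
    rw [Finset.sum_add_distrib, Finset.sum_const, Nat.cast_smul_eq_nsmul]
  have hsplit : (∑ x ∈ t, x) = (if a ∈ t then (1:ZMod 2) else 0) • a + ((∑ y ∈ Y, y) + (Y.card : ZMod 2) • a) := by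
    rw [← hsum']
    by_cases hat : a ∈ t
    · rw [if_pos hat, one_smul]
      exact (Finset.add_sum_erase t (fun x => x) hat).symm
    · rw [if_neg hat, zero_smul, zero_add, Finset.erase_eq_of_notMem hat]
  set c : ZMod 2 := (if a ∈ t then (1:ZMod 2) else 0) + (Y.card : ZMod 2) with hc
  have hsum2 : (∑ y ∈ Y, y) + c • a = 0 := by
    rw [hc, add_smul]
    rw [hsplit] at hsum
    rw [← hsum]; abel
  have hc01 : c = 0 ∨ c = 1 := (by decide : ∀ d : ZMod 2, d = 0 ∨ d = 1) c
  rcases hc01 with h1 | h1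
  · -- sum Y = 0, so Y = ∅
    rw [h1, zero_smul, add_zero] at hsum2
    have hYe : Y = ∅ := hσ Y (fun x hx => Finset.mem_of_mem_erase (hYsub hx)) hsum2
    have hcard : (Y.card : ZMod 2) = 0 := by rw [hYe]; simp
    have hat : a ∉ t := by
      intro hat
      rw [hc, hcard, if_pos hat, add_zero] at h1
      exact one_ne_zero h1
    have : t.erase a = ∅ := by rw [← hYim, hYe]; simp
    rwa [Finset.erase_eq_of_notMem hat] at this
  · -- sum (insert a Y) = 0 contradiction
    rw [h1, one_smul] at hsum2
    have : (∑ x ∈ insert a Y, x) = 0 := by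
      rw [Finset.sum_insert haY, add_comm, hsum2]
    have he := hσ (insert a Y) (by
      intro x hx
      rcases Finset.mem_insert.mp hx with h | h
      · exact h ▸ ha
      · exact Finset.mem_of_mem_erase (hYsub h)) this
    simp at he

lemma simpRel_iff {σ : Finset (V n)} (hσ : Good σ) (τ : Finset (V n)) :
    SimpRel σ τ ↔ τ = σ ∨ ∃ a ∈ σ, τ = nbr σ a := by
  constructor
  · rintro (h | ⟨a, hint, hshift⟩)
    · exact Or.inl h.symm
    · have haσ : a ∈ σ := by
        have : a ∈ σ ∩ τ := hint ▸ Finset.mem_singleton_self a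
        exact (Finset.mem_inter.mp this).1
      have haτ : a ∈ τ := by
        have : a ∈ σ ∩ τ := hint ▸ Finset.mem_singleton_self a
        exact (Finset.mem_inter.mp this).2
      refine Or.inr ⟨a, haσ, ?_⟩
      rw [Finset.sdiff_singleton_eq_erase, Finset.sdiff_singleton_eq_erase] at hshift
      rw [← Finset.insert_erase haτ, ← hshift]
      rfl
  · rintro (h | ⟨a, ha, h⟩)
    · exact Or.inl h.symm
    · subst h
      refine Or.inr ⟨a, ?_, ?_⟩
      · ext x
        simp only [Finset.mem_inter, Finset.mem_singleton]
        constructor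
        · rintro ⟨hxσ, hxn⟩
          rcases mem_nbr_elim hxn with h | ⟨y, hy, hxy⟩
          · exact h
          · by_contra hxa
            have hyσ := Finset.mem_of_mem_erase hy
            have hyne : (y:V n) ≠ a := Finset.ne_of_mem_erase hy
            have hxy' : x ≠ y := by
              intro h
              have h2 : x = x + a := by rw [← h] at hxy; exact hxy
              have ha0 : a = 0 := by
                calc a = (x + x) + a := by rw [mod2_add_self, zero_add]
                _ = x + (x + a) := by abel
                _ = x + x := by rw [← h2]
                _ = 0 := mod2_add_self x
              exact good_zero hσ (ha0 ▸ ha)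
            have := good_three hσ hxσ hyσ ha hxy' hxa hyne
            apply this
            rw [hxy]
            calc y + a + y + a = (y+y) + (a+a) := by abel
            _ = 0 := by rw [mod2_add_self, mod2_add_self, add_zero]
        · rintro rfl
          exact ⟨ha, Finset.mem_insert_self _ _⟩
      · rw [Finset.sdiff_singleton_eq_erase, Finset.sdiff_singleton_eq_erase]
        have hax : a ∉ shift (σ.erase a) a := by
          intro h
          rcases Finset.mem_image.mp h with ⟨y, hy, hya⟩
          have : y = 0 := by
            have := congrArg (· + a) hya
            simpa [add_assoc, mod2_add_self] using this
          exact good_zero hσ (this ▸ (Finset.mem_of_mem_erase hy))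
        rw [nbr, Finset.erase_insert hax]

lemma simpRel_nbr_iff {σ : Finset (V n)} {a₀ : V n} (hσ : Good σ) (ha₀ : a₀ ∈ σ) (τ : Finset (V n)) :
    SimpRel σ τ ↔ SimpRel (nbr σ a₀) τ := by
  rw [simpRel_iff hσ, simpRel_iff (good_nbr hσ ha₀)]
  constructor
  · rintro (rfl | ⟨a, ha, rfl⟩)
    · exact Or.inr ⟨a₀, Finset.mem_insert_self _ _, (nbr_nbr_self hσ ha₀).symm⟩
    · by_cases h : a = a₀
      · subst h; exact Or.inl rfl
      · refine Or.inr ⟨a + a₀, ?_, (nbr_nbr_shift hσ ha₀ ha h).symm⟩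
        exact Finset.mem_insert_of_mem
          (Finset.mem_image_of_mem _ (Finset.mem_erase.mpr ⟨h, ha⟩))
  · rintro (rfl | ⟨b, hb, rfl⟩)
    · exact Or.inr ⟨a₀, ha₀, rfl⟩
    · rcases mem_nbr_elim hb with rfl | ⟨y, hy, rfl⟩
      · exact Or.inl (nbr_nbr_self hσ ha₀)
      · exact Or.inr ⟨y, Finset.mem_of_mem_erase hy,
          nbr_nbr_shift hσ ha₀ (Finset.mem_of_mem_erase hy) (Finset.ne_of_mem_erase hy)⟩

lemma pairClass_nbr {σ : Finset (V n)} {a₀ : V n} (hσ : Good σ) (ha₀ : a₀ ∈ σ) (τ : Finset (V n)) :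
    pairClass σ τ = pairClass (nbr σ a₀) τ := by
  unfold pairClass
  congr 1
  exact Finset.filter_congr (fun x _ => by
    rw [simpRel_nbr_iff hσ ha₀ x])

lemma dual_inj_r {f : Fin n → Module.Dual (ZMod 2) (V n)} {β : Fin n → V n}
    (hd : ∀ i j, f i (β j) = if i = j then 1 else 0) : Function.Injective β := by
  intro i j h
  have h1 := hd i j
  rw [← h, hd i i] at h1
  by_contra hij
  rw [if_neg hij, if_pos rfl] at h1
  exact (one_ne_zero : (1:ZMod 2) ≠ 0) h1

lemma dual_inj_l {f : Fin n → Module.Dual (ZMod 2) (V n)} {β : Fin n → V n}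
    (hd : ∀ i j, f i (β j) = if i = j then 1 else 0) : Function.Injective f := by
  intro i j h
  have h1 := hd i j
  rw [h, hd j j] at h1
  by_contra hij
  rw [if_pos rfl, if_neg hij] at h1
  exact (one_ne_zero : (1:ZMod 2) ≠ 0) h1

lemma sep (g : Fin n → Module.Dual (ZMod 2) (V n))
    (hsp : Submodule.span (ZMod 2) (Set.range g) = ⊤) {x y : V n}
    (h : ∀ i, g i x = g i y) : x = y := by
  have hz : ∀ φ : Module.Dual (ZMod 2) (V n), φ (x - y) = 0 := by
    intro φ
    have hφ : φ ∈ Submodule.span (ZMod 2) (Set.range g) := by rw [hsp]; trivial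
    induction hφ using Submodule.span_induction with
    | mem φ hφ =>
      obtain ⟨i, rfl⟩ := hφ
      rw [map_sub, h i, sub_self]
    | zero => simp
    | add φ ψ _ _ h1 h2 => simp [h1, h2]
    | smul c φ _ h1 => simp [h1]
  have := (Module.forall_dual_apply_eq_zero_iff (ZMod 2) (x - y)).mp hz
  exact sub_eq_zero.mp this

lemma exists_perm {X : Type*} (f g : Fin n → X) (hg : Function.Injective g)
    (h : Multiset.map f Finset.univ.val = Multiset.map g Finset.univ.val) :
    ∃ π : Fin n ≃ Fin n, ∀ j, g j = f (π j) := by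
  have hmem : ∀ j, ∃ i, f i = g j := by
    intro j
    have : g j ∈ Multiset.map f Finset.univ.val := by
      rw [h]
      exact Multiset.mem_map_of_mem _ (Finset.mem_univ_val j)
    rw [Multiset.mem_map] at this
    obtain ⟨i, _, hi⟩ := this
    exact ⟨i, hi⟩
  choose p hp using hmem
  have hpinj : Function.Injective p := by
    intro i j hij
    apply hg
    rw [← hp i, ← hp j, hij]
  exact ⟨Equiv.ofBijective p (Finite.injective_iff_bijective.mp hpinj),
    fun j => (hp j).symm⟩

lemma good_image (f : Fin n → Module.Dual (ZMod 2) (V n)) (β : Fin n → V n)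
    (hd : ∀ i j, f i (β j) = if i = j then 1 else 0) (S : Finset (Fin n)) :
    Good (S.image β) := by
  have hβ := dual_inj_r hd
  intro t ht hsum
  obtain ⟨T, hT, rfl⟩ := Finset.subset_image_iff.mp ht
  rw [Finset.image_eq_empty]
  by_contra hne
  obtain ⟨i, hi⟩ := Finset.nonempty_iff_ne_empty.mpr hne
  rw [Finset.sum_image (fun x _ y _ h => hβ h)] at hsum
  have := congrArg (f i) hsum
  rw [map_sum, map_zero] at this
  rw [Finset.sum_congr rfl (fun j _ => hd i j)] at this
  rw [Finset.sum_ite_eq _ i (fun _ => (1:ZMod 2)), if_pos hi] at this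
  exact one_ne_zero this

lemma lemmaA (f g : Fin n → Module.Dual (ZMod 2) (V n)) (β γ : Fin n → V n)
    (hgsp : Submodule.span (ZMod 2) (Set.range g) = ⊤)
    (hdf : ∀ i j, f i (β j) = if i = j then 1 else 0)
    (hdg : ∀ i j, g i (γ j) = if i = j then 1 else 0)
    (hmap : Multiset.map f Finset.univ.val = Multiset.map g Finset.univ.val)
    (S T : Finset (Fin n)) (hsum : (∑ i ∈ S, f i) = ∑ i ∈ T, g i) :
    S.image β = T.image γ ∧ Sᶜ.image β = Tᶜ.image γ := by
  obtain ⟨π, hπ⟩ := exists_perm f g (dual_inj_l hdg) hmap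
  have hγ : ∀ j, γ j = β (π j) := by
    intro j
    apply sep g hgsp
    intro i
    rw [hdg i j, hπ i, hdf (π i) (π j)]
    simp [π.injective.eq_iff]
  have hST : S = T.image π := by
    ext j
    have h1 := congrArg (fun φ : Module.Dual (ZMod 2) (V n) => φ (β j)) hsum
    simp only [LinearMap.sum_apply] at h1
    simp only [hπ, hdf, Equiv.apply_eq_iff_eq_symm_apply] at h1
    rw [Finset.sum_ite_eq' S j (fun _ => (1:ZMod 2)),
      Finset.sum_ite_eq' T (π.symm j) (fun _ => (1:ZMod 2))] at h1
    constructor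
    · intro hj
      rw [if_pos hj] at h1
      have : π.symm j ∈ T := by
        by_contra hc
        rw [if_neg hc] at h1
        exact one_ne_zero h1
      exact Finset.mem_image.mpr ⟨π.symm j, this, by simp⟩
    · intro hj
      obtain ⟨i, hi, rfl⟩ := Finset.mem_image.mp hj
      rw [show π.symm (π i) = i by simp, if_pos hi] at h1
      by_contra hc
      rw [if_neg hc] at h1
      exact one_ne_zero h1.symm
  have him : ∀ W : Finset (Fin n), W.image γ = (W.image π).image β := by
    intro W
    rw [Finset.image_image]
    exact Finset.image_congr (fun j _ => hγ j)
  have hcompl : Tᶜ.image π = (T.image π)ᶜ := by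
    ext x
    simp only [Finset.mem_image, Finset.mem_compl]
    constructor
    · rintro ⟨i, hi, rfl⟩ ⟨i', hi', he⟩
      exact hi (π.injective he ▸ hi')
    · intro hx
      exact ⟨π.symm x, fun hc => hx ⟨π.symm x, hc, by simp⟩, by simp⟩
  refine ⟨?_, ?_⟩
  · rw [him T, ← hST]
  · rw [him Tᶜ, hcompl, ← hST]

end Aux

/-- Monomials in `F_2[Hom(Z_2^n, Z_2)]`, viewed as multisets of linear functionals:
these model `Z_2^n`-representations. -/
abbrev Mon (n : ℕ) : Type := Multiset (Module.Dual (ZMod 2) (V n))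

/-- A faithful `(n+1)`-dimensional `Z_2^n`-representation: `n+1` nonzero
functionals which collectively span `Hom(Z_2^n, Z_2)`. -/
def Faithful (n : ℕ) (m : Mon n) : Prop :=
  Multiset.card m = n + 1 ∧ (0 : Module.Dual (ZMod 2) (V n)) ∉ m ∧
    Submodule.span (ZMod 2) {f : Module.Dual (ZMod 2) (V n) | f ∈ m} = ⊤

/-- the element `D(τ) = [α_1,...,α_{p+1}] ⊗ {α_{p+2},...,α_n}` attached to a
faithful `(n+1)`-dimensional representation `τ = ρ_0 ρ_1 ⋯ ρ_n` is independent of the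
choice of the basis `{ρ_1,...,ρ_n}` among the factors of `τ`. -/
theorem stmt9 (n : ℕ) (ρ0 ρ0' : Module.Dual (ZMod 2) (V n))
    (ρ ρ' : Fin n → Module.Dual (ZMod 2) (V n)) (α α' : Fin n → V n)
    (hli : LinearIndependent (ZMod 2) ρ)
    (hsp : Submodule.span (ZMod 2) (Set.range ρ) = ⊤)
    (hli' : LinearIndependent (ZMod 2) ρ')
    (hsp' : Submodule.span (ZMod 2) (Set.range ρ') = ⊤)
    (hdual : ∀ i j, ρ i (α j) = if i = j then 1 else 0)
    (hdual' : ∀ i j, ρ' i (α' j) = if i = j then 1 else 0)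
    (S S' : Finset (Fin n)) (hS : S.Nonempty) (hS' : S'.Nonempty)
    (h0 : ρ0 = ∑ i ∈ S, ρ i) (h0' : ρ0' = ∑ i ∈ S', ρ' i)
    (hsame : ρ0 ::ₘ Multiset.map ρ Finset.univ.val
      = ρ0' ::ₘ Multiset.map ρ' Finset.univ.val) :
    pairClass (S.image α) (Sᶜ.image α) = pairClass (S'.image α') (S'ᶜ.image α') := by
  classical
  have hαinj := dual_inj_r hdual
  rcases Multiset.cons_eq_cons.mp hsame with ⟨he, hmaps⟩ | ⟨hne, cs, hcs1, hcs2⟩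
  · obtain ⟨h1, h2⟩ := lemmaA ρ ρ' α α' hsp' hdual hdual' hmaps S S'
      (by rw [← h0, ← h0', he])
    rw [h1, h2]
  · -- ρ0' is one of the ρ i
    have hmem : ρ0' ∈ Multiset.map ρ Finset.univ.val := by
      rw [hcs1]; exact Multiset.mem_cons_self _ _
    rw [Multiset.mem_map] at hmem
    obtain ⟨k, -, hk⟩ := hmem
    set σf : Fin n → Module.Dual (ZMod 2) (V n) := fun i => if i = k then ρ0 else ρ i with hσf
    set βf : Fin n → V n :=
      fun j => if j = k then α k else if j ∈ S then α j + α k else α j with hβf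
    have hunodup : (Finset.univ.val : Multiset (Fin n)).Nodup := Finset.univ.nodup
    have hker : (Finset.univ.val : Multiset (Fin n)) = k ::ₘ Finset.univ.val.erase k :=
      (Multiset.cons_erase (Finset.mem_univ_val k)).symm
    have hcs : cs = Multiset.map ρ (Finset.univ.val.erase k) := by
      have h := hcs1
      rw [hker, Multiset.map_cons, hk] at h
      exact ((Multiset.cons_inj_right ρ0').mp h).symm
    have hσfk : σf k = ρ0 := by simp [hσf]
    have hσfne : ∀ i, i ≠ k → σf i = ρ i := fun i h => by simp [hσf, h]
    have hβfk : βf k = α k := by simp [hβf]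
    have hβfS : ∀ j, j ≠ k → j ∈ S → βf j = α j + α k := fun j h1 h2 => by
      simp [hβf, h1, h2]
    have hβfnS : ∀ j, j ≠ k → j ∉ S → βf j = α j := fun j h1 h2 => by
      simp [hβf, h1, h2]
    have hmapeq : Multiset.map σf Finset.univ.val = Multiset.map ρ' Finset.univ.val := by
      rw [hcs2, hcs]
      conv_lhs => rw [hker]
      rw [Multiset.map_cons, hσfk]
      congr 1
      apply Multiset.map_congr rfl
      intro x hx
      have hxk : x ≠ k := (hunodup.mem_erase_iff.mp hx).1
      exact hσfne x hxk
    obtain ⟨π, hπ⟩ := exists_perm σf ρ' hli'.injective hmapeq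
    have hσli : LinearIndependent (ZMod 2) σf := by
      have hcomp : σf = ρ' ∘ π.symm := by
        funext i
        rw [Function.comp_apply, hπ (π.symm i), Equiv.apply_symm_apply]
      rw [hcomp]
      exact hli'.comp π.symm π.symm.injective
    have hkS : k ∈ S := by
      by_contra hkS
      have e1 : (∑ i : Fin n, (if i = k then (1:ZMod 2) else 0) • σf i) = σf k := by
        simp only [ite_smul, one_smul, zero_smul]
        rw [Finset.sum_ite_eq' Finset.univ k σf, if_pos (Finset.mem_univ k)]
      have e2 : (∑ i : Fin n, (if i ∈ S then (1:ZMod 2) else 0) • σf i) = ∑ i ∈ S, σf i := by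
        simp only [ite_smul, one_smul, zero_smul]
        rw [Finset.sum_ite_mem Finset.univ S σf, Finset.univ_inter]
      have e3 : (∑ i ∈ S, σf i) = ρ0 := by
        rw [Finset.sum_congr rfl (fun i hi =>
          hσfne i (fun h => hkS (h ▸ hi)))]
        exact h0.symm
      have hrel : (∑ i : Fin n,
          ((if i = k then (1:ZMod 2) else 0) + (if i ∈ S then 1 else 0)) • σf i) = 0 := by
        rw [Finset.sum_congr rfl (fun i _ => add_smul _ _ (σf i)), Finset.sum_add_distrib,
          e1, e2, e3, hσfk, mod2_add_self]
      have := Fintype.linearIndependent_iff.mp hσli _ hrel k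
      rw [if_pos rfl, if_neg hkS, add_zero] at this
      exact (one_ne_zero : (1:ZMod 2) ≠ 0) this
    have hval : ∀ m, ρ0 (α m) = if m ∈ S then (1:ZMod 2) else 0 := by
      intro m
      rw [h0, LinearMap.sum_apply]
      simp only [hdual]
      rw [Finset.sum_ite_eq' S m (fun _ => (1:ZMod 2))]
    have hdf : ∀ i j, σf i (βf j) = if i = j then (1:ZMod 2) else 0 := by
      intro i j
      by_cases hik : i = k <;> by_cases hjk : j = k
      · rw [hik, hjk, hσfk, hβfk, hval k, if_pos hkS, if_pos rfl]
      · rw [hik, hσfk]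
        by_cases hjS : j ∈ S
        · rw [hβfS j hjk hjS, map_add, hval j, hval k, if_pos hjS, if_pos hkS,
            if_neg (fun h : k = j => hjk h.symm)]
          decide
        · rw [hβfnS j hjk hjS, hval j, if_neg hjS,
            if_neg (fun h : k = j => hjk h.symm)]
      · rw [hjk, hσfne i hik, hβfk, hdual i k]
      · by_cases hjS : j ∈ S
        · rw [hσfne i hik, hβfS j hjk hjS, map_add, hdual i j, hdual i k,
            if_neg hik, add_zero]
        · rw [hσfne i hik, hβfnS j hjk hjS, hdual i j]
    have hsumA : (∑ i ∈ S, σf i) = ∑ i ∈ S', ρ' i := by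
      rw [← h0', ← hk]
      rw [← Finset.add_sum_erase S σf hkS,
        Finset.sum_congr rfl (fun i hi => hσfne i (Finset.ne_of_mem_erase hi)),
        hσfk, h0, ← Finset.add_sum_erase S ρ hkS,
        add_assoc, mod2_add_self, add_zero]
    obtain ⟨hA1, hA2⟩ := lemmaA σf ρ' βf α' hsp' hdf hdual' hmapeq S S' hsumA
    have hc : Sᶜ.image α = Sᶜ.image βf := by
      apply Finset.image_congr
      intro j hj
      have hjS : j ∉ S := Finset.mem_compl.mp hj
      have hjk : j ≠ k := fun h => hjS (h ▸ hkS)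
      exact (hβfnS j hjk hjS).symm
    have hnb : S.image βf = nbr (S.image α) (α k) := by
      rw [nbr, shift, ← Finset.image_erase hαinj S k, Finset.image_image]
      conv_lhs => rw [← Finset.insert_erase hkS]
      rw [Finset.image_insert, hβfk]
      congr 1
      apply Finset.image_congr
      intro j hj
      rw [hβfS j (Finset.ne_of_mem_erase hj) (Finset.mem_of_mem_erase hj)]
      rfl
    calc pairClass (S.image α) (Sᶜ.image α)
        = pairClass (nbr (S.image α) (α k)) (Sᶜ.image α) :=
          pairClass_nbr (good_image ρ α hdual S) (Finset.mem_image_of_mem α hkS) _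
      _ = pairClass (S.image βf) (Sᶜ.image βf) := by rw [hnb, hc]
      _ = pairClass (S'.image α') (S'ᶜ.image α') := by rw [hA1, hA2]
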